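/- Let H = {0, 89, 178, 267, 356, 445, 534} ⊆ ℤ/623ℤ and let B = {0, 1, 3, 189, 286, 304, 568, 580} ⊆ ℤ/623ℤ. Then H is a subgroup of ℤ/623ℤ of order 7, and the eleven difference sets Δ(8ⁱ·B) for i = 0, 1, …, 10 are pairwise disjoint, each has cardinality 56, each is disjoint from H, and their union together with H \ {0} is (ℤ/623ℤ) \ {0}. -/
import Mathlib

set_option maxRecDepth 40000
set_option maxHeartbeats 1000000

/-- The set of differences `ΔB = {a - c : a, c ∈ B, a ≠ c}`. -/
def diffSet (B : Finset (ZMod 623)) : Finset (ZMod 623) :=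
  ((B ×ˢ B).filter fun p => p.1 ≠ p.2).image fun p => p.1 - p.2

/-- The subgroup block `H = {0, 89, 178, 267, 356, 445, 534}` of `ℤ/623ℤ`. -/
def Hblock : Finset (ZMod 623) := {0, 89, 178, 267, 356, 445, 534}

/-- The base block `B`. -/
def baseBlock : Finset (ZMod 623) := {0, 1, 3, 189, 286, 304, 568, 580}

/-- The dilates `8ⁱ · B` of the base block, for `i = 0, 1, …, 10`. -/
def dilate (i : Fin 11) : Finset (ZMod 623) :=
  baseBlock.image fun x => (8 : ZMod 623) ^ (i : ℕ) * x

def Hsub : AddSubgroup (ZMod 623) where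
  carrier := ↑Hblock
  zero_mem' := by simp [Hblock]
  add_mem' := by
    intro a b ha hb
    simp only [Hblock, Finset.coe_insert, Set.mem_insert_iff, Finset.coe_singleton,
      Set.mem_singleton_iff] at ha hb ⊢
    rcases ha with rfl|rfl|rfl|rfl|rfl|rfl|rfl <;>
      rcases hb with rfl|rfl|rfl|rfl|rfl|rfl|rfl <;> decide
  neg_mem' := by
    intro a ha
    simp only [Hblock, Finset.coe_insert, Set.mem_insert_iff, Finset.coe_singleton,
      Set.mem_singleton_iff] at ha ⊢
    rcases ha with rfl|rfl|rfl|rfl|rfl|rfl|rfl <;> decide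

def L0 : List (ZMod 623) := [1, 2, 3, 12, 18, 43, 44, 46, 55, 56, 58, 97, 115, 186, 188, 189, 232, 244, 264, 276, 282, 283, 285, 286, 294, 301, 303, 304, 319, 320, 322, 329, 337, 338, 340, 341, 347, 359, 379, 391, 434, 435, 437, 508, 526, 565, 567, 568, 577, 579, 580, 605, 611, 620, 621, 622]
def L1 : List (ZMod 623) := [8, 13, 16, 24, 60, 68, 83, 84, 96, 140, 144, 153, 159, 175, 183, 204, 212, 228, 236, 242, 243, 255, 258, 266, 271, 279, 284, 297, 326, 339, 344, 352, 357, 365, 368, 380, 381, 387, 395, 411, 419, 440, 448, 464, 470, 479, 483, 527, 539, 540, 555, 563, 599, 607, 610, 615]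
def L2 : List (ZMod 623) := [19, 22, 26, 41, 45, 49, 64, 67, 75, 79, 94, 104, 116, 126, 128, 143, 145, 154, 171, 173, 192, 195, 218, 220, 237, 259, 260, 299, 324, 363, 364, 386, 403, 405, 428, 431, 450, 452, 469, 478, 480, 495, 497, 507, 519, 529, 544, 548, 556, 559, 574, 578, 582, 597, 601, 604]
def L3 : List (ZMod 623) := [9, 14, 23, 27, 86, 87, 100, 102, 109, 111, 122, 125, 129, 138, 152, 176, 203, 208, 209, 211, 222, 231, 238, 263, 290, 295, 305, 309, 314, 318, 328, 333, 360, 385, 392, 401, 412, 414, 415, 420, 447, 471, 485, 494, 498, 501, 512, 514, 521, 523, 536, 537, 596, 600, 609, 614]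
def L4 : List (ZMod 623) := [20, 21, 30, 35, 52, 65, 72, 73, 93, 112, 132, 142, 162, 172, 177, 181, 184, 193, 197, 205, 214, 216, 235, 245, 246, 249, 265, 270, 353, 358, 374, 377, 378, 388, 407, 409, 418, 426, 430, 439, 442, 446, 451, 461, 481, 491, 511, 530, 550, 551, 558, 571, 588, 593, 602, 603]
def L5 : List (ZMod 623) := [11, 39, 47, 50, 91, 99, 103, 110, 121, 123, 130, 141, 157, 160, 168, 170, 190, 202, 207, 226, 229, 240, 251, 273, 280, 291, 293, 298, 325, 330, 332, 343, 350, 372, 383, 394, 397, 416, 421, 433, 453, 455, 463, 466, 482, 493, 500, 502, 513, 520, 524, 532, 573, 576, 584, 612]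
def L6 : List (ZMod 623) := [10, 34, 37, 51, 61, 88, 98, 105, 108, 114, 118, 139, 148, 164, 169, 201, 206, 213, 223, 247, 252, 253, 257, 262, 274, 278, 308, 311, 312, 315, 345, 349, 361, 366, 370, 371, 376, 400, 410, 417, 422, 454, 459, 475, 484, 505, 509, 515, 518, 525, 535, 562, 572, 586, 589, 613]
def L7 : List (ZMod 623) := [4, 28, 62, 66, 80, 81, 85, 106, 107, 134, 135, 147, 155, 161, 165, 187, 215, 217, 221, 227, 241, 261, 268, 272, 289, 296, 300, 302, 321, 323, 327, 334, 351, 355, 362, 382, 396, 402, 406, 408, 436, 458, 462, 468, 476, 488, 489, 516, 517, 538, 542, 543, 557, 561, 595, 619]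
def L8 : List (ZMod 623) := [6, 17, 25, 32, 42, 53, 57, 59, 70, 74, 76, 92, 95, 101, 124, 127, 133, 149, 166, 174, 180, 219, 224, 225, 233, 250, 275, 307, 316, 348, 373, 390, 398, 399, 404, 443, 449, 457, 474, 490, 496, 499, 522, 528, 531, 547, 549, 553, 564, 566, 570, 581, 591, 598, 606, 617]
def L9 : List (ZMod 623) := [5, 15, 31, 36, 48, 54, 63, 69, 77, 82, 113, 117, 131, 136, 137, 146, 151, 167, 182, 185, 194, 199, 200, 230, 254, 256, 287, 292, 331, 336, 367, 369, 393, 423, 424, 429, 438, 441, 456, 472, 477, 486, 487, 492, 506, 510, 541, 546, 554, 560, 569, 575, 587, 592, 608, 618]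
def L10 : List (ZMod 623) := [7, 29, 33, 38, 40, 71, 78, 90, 119, 120, 150, 156, 158, 163, 179, 191, 196, 198, 210, 234, 239, 248, 269, 277, 281, 288, 306, 310, 313, 317, 335, 342, 346, 354, 375, 384, 389, 413, 425, 427, 432, 444, 460, 465, 467, 473, 503, 504, 533, 545, 552, 583, 585, 590, 594, 616]
def D0 : Finset (ZMod 623) := ⟨↑L0, by decide⟩
def D1 : Finset (ZMod 623) := ⟨↑L1, by decide⟩
def D2 : Finset (ZMod 623) := ⟨↑L2, by decide⟩
def D3 : Finset (ZMod 623) := ⟨↑L3, by decide⟩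
def D4 : Finset (ZMod 623) := ⟨↑L4, by decide⟩
def D5 : Finset (ZMod 623) := ⟨↑L5, by decide⟩
def D6 : Finset (ZMod 623) := ⟨↑L6, by decide⟩
def D7 : Finset (ZMod 623) := ⟨↑L7, by decide⟩
def D8 : Finset (ZMod 623) := ⟨↑L8, by decide⟩
def D9 : Finset (ZMod 623) := ⟨↑L9, by decide⟩
def D10 : Finset (ZMod 623) := ⟨↑L10, by decide⟩
def HL : List (ZMod 623) := [0, 89, 178, 267, 356, 445, 534]
def HB : Finset (ZMod 623) := ⟨↑HL, by decide⟩

def Dfun : Fin 11 → Finset (ZMod 623)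
  | 0 => D0
  | 1 => D1
  | 2 => D2
  | 3 => D3
  | 4 => D4
  | 5 => D5
  | 6 => D6
  | 7 => D7
  | 8 => D8
  | 9 => D9
  | 10 => D10

lemma disj_of_all (l₁ l₂ : List (ZMod 623)) (h₁ : (↑l₁ : Multiset (ZMod 623)).Nodup)
    (h₂ : (↑l₂ : Multiset (ZMod 623)).Nodup)
    (H : (l₁.all fun x => !(l₂.contains x)) = true) :
    Disjoint (⟨↑l₁, h₁⟩ : Finset (ZMod 623)) (⟨↑l₂, h₂⟩ : Finset (ZMod 623)) := by
  rw [Finset.disjoint_left]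
  intro a ha hat
  rw [Finset.mem_mk, Multiset.mem_coe] at ha hat
  rw [List.all_eq_true] at H
  have := H a ha
  rw [Bool.not_eq_true'] at this
  simpa using (List.elem_eq_true_of_mem hat).symm.trans this

lemma hbeq : Hblock = HB := by decide

lemma d0_1 : Disjoint D0 D1 := disj_of_all _ _ _ _ (by decide)
lemma d0_2 : Disjoint D0 D2 := disj_of_all _ _ _ _ (by decide)
lemma d0_3 : Disjoint D0 D3 := disj_of_all _ _ _ _ (by decide)
lemma d0_4 : Disjoint D0 D4 := disj_of_all _ _ _ _ (by decide)
lemma d0_5 : Disjoint D0 D5 := disj_of_all _ _ _ _ (by decide)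
lemma d0_6 : Disjoint D0 D6 := disj_of_all _ _ _ _ (by decide)
lemma d0_7 : Disjoint D0 D7 := disj_of_all _ _ _ _ (by decide)
lemma d0_8 : Disjoint D0 D8 := disj_of_all _ _ _ _ (by decide)
lemma d0_9 : Disjoint D0 D9 := disj_of_all _ _ _ _ (by decide)
lemma d0_10 : Disjoint D0 D10 := disj_of_all _ _ _ _ (by decide)
lemma d1_2 : Disjoint D1 D2 := disj_of_all _ _ _ _ (by decide)
lemma d1_3 : Disjoint D1 D3 := disj_of_all _ _ _ _ (by decide)
lemma d1_4 : Disjoint D1 D4 := disj_of_all _ _ _ _ (by decide)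
lemma d1_5 : Disjoint D1 D5 := disj_of_all _ _ _ _ (by decide)
lemma d1_6 : Disjoint D1 D6 := disj_of_all _ _ _ _ (by decide)
lemma d1_7 : Disjoint D1 D7 := disj_of_all _ _ _ _ (by decide)
lemma d1_8 : Disjoint D1 D8 := disj_of_all _ _ _ _ (by decide)
lemma d1_9 : Disjoint D1 D9 := disj_of_all _ _ _ _ (by decide)
lemma d1_10 : Disjoint D1 D10 := disj_of_all _ _ _ _ (by decide)
lemma d2_3 : Disjoint D2 D3 := disj_of_all _ _ _ _ (by decide)
lemma d2_4 : Disjoint D2 D4 := disj_of_all _ _ _ _ (by decide)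
lemma d2_5 : Disjoint D2 D5 := disj_of_all _ _ _ _ (by decide)
lemma d2_6 : Disjoint D2 D6 := disj_of_all _ _ _ _ (by decide)
lemma d2_7 : Disjoint D2 D7 := disj_of_all _ _ _ _ (by decide)
lemma d2_8 : Disjoint D2 D8 := disj_of_all _ _ _ _ (by decide)
lemma d2_9 : Disjoint D2 D9 := disj_of_all _ _ _ _ (by decide)
lemma d2_10 : Disjoint D2 D10 := disj_of_all _ _ _ _ (by decide)
lemma d3_4 : Disjoint D3 D4 := disj_of_all _ _ _ _ (by decide)
lemma d3_5 : Disjoint D3 D5 := disj_of_all _ _ _ _ (by decide)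
lemma d3_6 : Disjoint D3 D6 := disj_of_all _ _ _ _ (by decide)
lemma d3_7 : Disjoint D3 D7 := disj_of_all _ _ _ _ (by decide)
lemma d3_8 : Disjoint D3 D8 := disj_of_all _ _ _ _ (by decide)
lemma d3_9 : Disjoint D3 D9 := disj_of_all _ _ _ _ (by decide)
lemma d3_10 : Disjoint D3 D10 := disj_of_all _ _ _ _ (by decide)
lemma d4_5 : Disjoint D4 D5 := disj_of_all _ _ _ _ (by decide)
lemma d4_6 : Disjoint D4 D6 := disj_of_all _ _ _ _ (by decide)
lemma d4_7 : Disjoint D4 D7 := disj_of_all _ _ _ _ (by decide)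
lemma d4_8 : Disjoint D4 D8 := disj_of_all _ _ _ _ (by decide)
lemma d4_9 : Disjoint D4 D9 := disj_of_all _ _ _ _ (by decide)
lemma d4_10 : Disjoint D4 D10 := disj_of_all _ _ _ _ (by decide)
lemma d5_6 : Disjoint D5 D6 := disj_of_all _ _ _ _ (by decide)
lemma d5_7 : Disjoint D5 D7 := disj_of_all _ _ _ _ (by decide)
lemma d5_8 : Disjoint D5 D8 := disj_of_all _ _ _ _ (by decide)
lemma d5_9 : Disjoint D5 D9 := disj_of_all _ _ _ _ (by decide)
lemma d5_10 : Disjoint D5 D10 := disj_of_all _ _ _ _ (by decide)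
lemma d6_7 : Disjoint D6 D7 := disj_of_all _ _ _ _ (by decide)
lemma d6_8 : Disjoint D6 D8 := disj_of_all _ _ _ _ (by decide)
lemma d6_9 : Disjoint D6 D9 := disj_of_all _ _ _ _ (by decide)
lemma d6_10 : Disjoint D6 D10 := disj_of_all _ _ _ _ (by decide)
lemma d7_8 : Disjoint D7 D8 := disj_of_all _ _ _ _ (by decide)
lemma d7_9 : Disjoint D7 D9 := disj_of_all _ _ _ _ (by decide)
lemma d7_10 : Disjoint D7 D10 := disj_of_all _ _ _ _ (by decide)
lemma d8_9 : Disjoint D8 D9 := disj_of_all _ _ _ _ (by decide)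
lemma d8_10 : Disjoint D8 D10 := disj_of_all _ _ _ _ (by decide)
lemma d9_10 : Disjoint D9 D10 := disj_of_all _ _ _ _ (by decide)
lemma h0 : Disjoint D0 Hblock := hbeq ▸ disj_of_all _ _ _ _ (by decide)
lemma h1 : Disjoint D1 Hblock := hbeq ▸ disj_of_all _ _ _ _ (by decide)
lemma h2 : Disjoint D2 Hblock := hbeq ▸ disj_of_all _ _ _ _ (by decide)
lemma h3 : Disjoint D3 Hblock := hbeq ▸ disj_of_all _ _ _ _ (by decide)
lemma h4 : Disjoint D4 Hblock := hbeq ▸ disj_of_all _ _ _ _ (by decide)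
lemma h5 : Disjoint D5 Hblock := hbeq ▸ disj_of_all _ _ _ _ (by decide)
lemma h6 : Disjoint D6 Hblock := hbeq ▸ disj_of_all _ _ _ _ (by decide)
lemma h7 : Disjoint D7 Hblock := hbeq ▸ disj_of_all _ _ _ _ (by decide)
lemma h8 : Disjoint D8 Hblock := hbeq ▸ disj_of_all _ _ _ _ (by decide)
lemma h9 : Disjoint D9 Hblock := hbeq ▸ disj_of_all _ _ _ _ (by decide)
lemma h10 : Disjoint D10 Hblock := hbeq ▸ disj_of_all _ _ _ _ (by decide)
lemma eq0 : diffSet (dilate 0) = D0 := by decide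
lemma eq1 : diffSet (dilate 1) = D1 := by decide
lemma eq2 : diffSet (dilate 2) = D2 := by decide
lemma eq3 : diffSet (dilate 3) = D3 := by decide
lemma eq4 : diffSet (dilate 4) = D4 := by decide
lemma eq5 : diffSet (dilate 5) = D5 := by decide
lemma eq6 : diffSet (dilate 6) = D6 := by decide
lemma eq7 : diffSet (dilate 7) = D7 := by decide
lemma eq8 : diffSet (dilate 8) = D8 := by decide
lemma eq9 : diffSet (dilate 9) = D9 := by decide
lemma eq10 : diffSet (dilate 10) = D10 := by decide

lemma eqAll : ∀ i, diffSet (dilate i) = Dfun i := by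
  intro i
  fin_cases i
  · exact eq0
  · exact eq1
  · exact eq2
  · exact eq3
  · exact eq4
  · exact eq5
  · exact eq6
  · exact eq7
  · exact eq8
  · exact eq9
  · exact eq10

lemma disjPairs : ∀ i j, i ≠ j → Disjoint (Dfun i) (Dfun j) := by
  intro i j hij
  fin_cases i <;> fin_cases j
  · exact absurd rfl hij
  · exact d0_1
  · exact d0_2
  · exact d0_3
  · exact d0_4
  · exact d0_5
  · exact d0_6
  · exact d0_7
  · exact d0_8
  · exact d0_9
  · exact d0_10
  · exact d0_1.symm
  · exact absurd rfl hij
  · exact d1_2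
  · exact d1_3
  · exact d1_4
  · exact d1_5
  · exact d1_6
  · exact d1_7
  · exact d1_8
  · exact d1_9
  · exact d1_10
  · exact d0_2.symm
  · exact d1_2.symm
  · exact absurd rfl hij
  · exact d2_3
  · exact d2_4
  · exact d2_5
  · exact d2_6
  · exact d2_7
  · exact d2_8
  · exact d2_9
  · exact d2_10
  · exact d0_3.symm
  · exact d1_3.symm
  · exact d2_3.symm
  · exact absurd rfl hij
  · exact d3_4
  · exact d3_5
  · exact d3_6
  · exact d3_7
  · exact d3_8
  · exact d3_9
  · exact d3_10
  · exact d0_4.symm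
  · exact d1_4.symm
  · exact d2_4.symm
  · exact d3_4.symm
  · exact absurd rfl hij
  · exact d4_5
  · exact d4_6
  · exact d4_7
  · exact d4_8
  · exact d4_9
  · exact d4_10
  · exact d0_5.symm
  · exact d1_5.symm
  · exact d2_5.symm
  · exact d3_5.symm
  · exact d4_5.symm
  · exact absurd rfl hij
  · exact d5_6
  · exact d5_7
  · exact d5_8
  · exact d5_9
  · exact d5_10
  · exact d0_6.symm
  · exact d1_6.symm
  · exact d2_6.symm
  · exact d3_6.symm
  · exact d4_6.symm
  · exact d5_6.symm
  · exact absurd rfl hij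
  · exact d6_7
  · exact d6_8
  · exact d6_9
  · exact d6_10
  · exact d0_7.symm
  · exact d1_7.symm
  · exact d2_7.symm
  · exact d3_7.symm
  · exact d4_7.symm
  · exact d5_7.symm
  · exact d6_7.symm
  · exact absurd rfl hij
  · exact d7_8
  · exact d7_9
  · exact d7_10
  · exact d0_8.symm
  · exact d1_8.symm
  · exact d2_8.symm
  · exact d3_8.symm
  · exact d4_8.symm
  · exact d5_8.symm
  · exact d6_8.symm
  · exact d7_8.symm
  · exact absurd rfl hij
  · exact d8_9
  · exact d8_10
  · exact d0_9.symm
  · exact d1_9.symm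
  · exact d2_9.symm
  · exact d3_9.symm
  · exact d4_9.symm
  · exact d5_9.symm
  · exact d6_9.symm
  · exact d7_9.symm
  · exact d8_9.symm
  · exact absurd rfl hij
  · exact d9_10
  · exact d0_10.symm
  · exact d1_10.symm
  · exact d2_10.symm
  · exact d3_10.symm
  · exact d4_10.symm
  · exact d5_10.symm
  · exact d6_10.symm
  · exact d7_10.symm
  · exact d8_10.symm
  · exact d9_10.symm
  · exact absurd rfl hij

lemma disjH : ∀ i, Disjoint (Dfun i) Hblock := by
  intro i
  fin_cases i
  · exact h0
  · exact h1
  · exact h2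
  · exact h3
  · exact h4
  · exact h5
  · exact h6
  · exact h7
  · exact h8
  · exact h9
  · exact h10

lemma cardAll : ∀ i, (Dfun i).card = 56 := by decide

/-- `H` is a subgroup of `ℤ/623ℤ` of order `7`, and the eleven difference sets
`Δ(8ⁱ · B)`, `i = 0, …, 10`, are pairwise disjoint, each has cardinality `56`,
each is disjoint from `H`, and their union together with `H \ {0}` is
`ℤ/623ℤ \ {0}`. -/
theorem one_rotational_difference_family_zmod_623_12 :
    (∃ S : AddSubgroup (ZMod 623), (S : Set (ZMod 623)) = (Hblock : Set (ZMod 623))) ∧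
    Hblock.card = 7 ∧
    (∀ i j, i ≠ j → Disjoint (diffSet (dilate i)) (diffSet (dilate j))) ∧
    (∀ i, (diffSet (dilate i)).card = 56) ∧
    (∀ i, Disjoint (diffSet (dilate i)) Hblock) ∧
    (Hblock \ {0}) ∪ (Finset.univ.biUnion fun i => diffSet (dilate i)) =
      Finset.univ \ {0} := by
  simp only [eqAll]
  refine ⟨⟨Hsub, rfl⟩, by decide, disjPairs, cardAll, disjH, ?_⟩
  have hdisjHB : Disjoint (Hblock \ {0}) (Finset.univ.biUnion fun i => Dfun i) := by
    rw [Finset.disjoint_biUnion_right]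
    intro i _
    exact ((disjH i).symm).mono_left (Finset.sdiff_subset)
  have hcardB : (Finset.univ.biUnion fun i => Dfun i).card = 616 := by
    rw [Finset.card_biUnion (fun x _ y _ hxy => disjPairs x y hxy)]
    simp [cardAll]
  have hsub : (Hblock \ {0}) ∪ (Finset.univ.biUnion fun i => Dfun i) ⊆
      Finset.univ \ {0} := by
    intro a ha
    rw [Finset.mem_sdiff]
    refine ⟨Finset.mem_univ _, ?_⟩
    rw [Finset.mem_union] at ha
    rcases ha with ha | ha
    · rw [Finset.mem_sdiff] at ha
      exact ha.2
    · rw [Finset.mem_biUnion] at ha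
      obtain ⟨i, _, hai⟩ := ha
      rw [Finset.mem_singleton]
      rintro rfl
      exact (Finset.disjoint_left.mp (disjH i)) hai (by decide)
  have hcard : ((Hblock \ {0}) ∪ (Finset.univ.biUnion fun i => Dfun i)).card = 622 := by
    rw [Finset.card_union_of_disjoint hdisjHB, hcardB]
    decide
  have hcard2 : (Finset.univ \ ({0} : Finset (ZMod 623))).card = 622 := by
    rw [Finset.card_sdiff_of_subset (by simp)]
    simp [Finset.card_univ]
  exact Finset.eq_of_subset_of_card_le hsub (by rw [hcard, hcard2])
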